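/- Edge influence on the model output for linear GCN (Theorem 1 / appendix E.3): assume H := Xᵀ Cᵀ C X is invertible, let w*(ε) := (Xᵀ (C + εΞ)ᵀ (C + εΞ) X)⁻¹ Xᵀ (C + εΞ)ᵀ y with w* := w*(0), and define the perturbed model output P(ε) := (C + εΞ) X w*(ε) ∈ ℝ^n. Then ε ↦ P(ε) is differentiable at ε = 0 with derivative Ξ X w* + C X H⁻¹ (Xᵀ Ξᵀ y − Xᵀ Cᵀ Ξ X w* − Xᵀ Ξᵀ C X w*). -/

import Mathlib

/-!
The prediction `P(ε)` is the least-squares fit `A(ε) (A(ε)ᵀ A(ε))⁻¹ A(ε)ᵀ y` along the curve of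
design matrices `A(ε) = (C + εΞ) X`, whose derivative at `0` is `Ξ X`. Differentiating with the
product rule for matrix products and `(H⁻¹)' = -H⁻¹ H' H⁻¹`, where `H' = Aᵀ A' + A'ᵀ A`, gives
the formula; `H⁻¹ Aᵀ y` is the unperturbed weight vector `w*`.
-/

open Matrix

-- Any norm would do for derivatives; the operator norm makes square matrices a normed algebra.
attribute [local instance] Matrix.linftyOpNormedAddCommGroup Matrix.linftyOpNormedSpace
  Matrix.linftyOpNormedRing Matrix.linftyOpNormedAlgebra

section Calculus

variable {𝕜 : Type*} [NontriviallyNormedField 𝕜] {x : 𝕜}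

theorem hasDerivAt_const_add_smul {E : Type*} [NormedAddCommGroup E] [NormedSpace 𝕜 E]
    (a b : E) (x : 𝕜) : HasDerivAt (fun t : 𝕜 => a + t • b) b x := by
  simpa using ((hasDerivAt_id x).smul_const b).const_add a

theorem LinearMap.hasDerivAt_of_bilinear [CompleteSpace 𝕜]
    {E F G : Type*} [NormedAddCommGroup E] [NormedSpace 𝕜 E] [FiniteDimensional 𝕜 E]
    [NormedAddCommGroup F] [NormedSpace 𝕜 F] [FiniteDimensional 𝕜 F]
    [NormedAddCommGroup G] [NormedSpace 𝕜 G]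
    (B : E →ₗ[𝕜] F →ₗ[𝕜] G) {u : 𝕜 → E} {v : 𝕜 → F} {u' : E} {v' : F}
    (hu : HasDerivAt u u' x) (hv : HasDerivAt v v' x) :
    HasDerivAt (fun t => B (u t) (v t)) (B (u x) v' + B u' (v x)) x :=
  B.toContinuousBilinearMap.hasDerivAt_of_bilinear (fun _ => hu) (fun _ => hv)

theorem HasDerivAt.ringInverse {R : Type*} [NormedRing R] [HasSummableGeomSeries R]
    [NormedAlgebra 𝕜 R] {A : 𝕜 → R} {A' : R} (u : Rˣ)
    (hA : HasDerivAt A A' x) (hx : A x = u) :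
    HasDerivAt (fun t => Ring.inverse (A t)) (-(↑u⁻¹ * A' * ↑u⁻¹)) x := by
  have hinv := hasFDerivAt_ringInverse (𝕜 := 𝕜) u
  rw [← hx] at hinv
  simpa [Function.comp_def] using hinv.comp_hasDerivAt x hA

variable [CompleteSpace 𝕜] {l m n : Type*} [Fintype l] [Fintype m] [Fintype n]

theorem HasDerivAt.matrix_mul {A : 𝕜 → Matrix l m 𝕜} {B : 𝕜 → Matrix m n 𝕜}
    {A' : Matrix l m 𝕜} {B' : Matrix m n 𝕜} (hA : HasDerivAt A A' x) (hB : HasDerivAt B B' x) :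
    HasDerivAt (fun t => A t * B t) (A x * B' + A' * B x) x :=
  (mulLinearMap 𝕜).hasDerivAt_of_bilinear hA hB

theorem HasDerivAt.matrix_mulVec {A : 𝕜 → Matrix m n 𝕜} {v : 𝕜 → n → 𝕜}
    {A' : Matrix m n 𝕜} {v' : n → 𝕜} (hA : HasDerivAt A A' x) (hv : HasDerivAt v v' x) :
    HasDerivAt (fun t => A t *ᵥ v t) (A x *ᵥ v' + A' *ᵥ v x) x :=
  (Matrix.mulVecBilin 𝕜 𝕜).hasDerivAt_of_bilinear hA hv

theorem HasDerivAt.matrix_transpose {A : 𝕜 → Matrix m n 𝕜} {A' : Matrix m n 𝕜}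
    (hA : HasDerivAt A A' x) : HasDerivAt (fun t => (A t)ᵀ) A'ᵀ x :=
  (transposeLinearEquiv m n 𝕜 𝕜).toLinearMap.toContinuousLinearMap.hasFDerivAt.comp_hasDerivAt x hA

theorem HasDerivAt.matrix_inv [DecidableEq n] {A : 𝕜 → Matrix n n 𝕜} {A' : Matrix n n 𝕜}
    (hA : HasDerivAt A A' x) (hx : IsUnit (A x)) :
    HasDerivAt (fun t => (A t)⁻¹) (-((A x)⁻¹ * A' * (A x)⁻¹)) x := by
  -- Instance search does not see completeness through the operator-norm uniformity.
  let := @instHasSummableGeomSeriesOfCompleteSpace _ _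
    (FiniteDimensional.complete 𝕜 (Matrix n n 𝕜))
  obtain ⟨u, hu⟩ := hx
  simp_rw [Matrix.nonsing_inv_eq_ringInverse, ← hu, Ring.inverse_unit]
  exact hA.ringInverse u hu.symm

end Calculus

namespace Matrix

variable {m k : Type*} [Fintype m] [Fintype k] [DecidableEq k]

noncomputable def leastSquaresWeights (A : Matrix m k ℝ) (y : m → ℝ) : k → ℝ :=
  (Aᵀ * A)⁻¹ *ᵥ (Aᵀ *ᵥ y)

theorem hasDerivAt_leastSquaresWeights {A : ℝ → Matrix m k ℝ} {A' : Matrix m k ℝ} {x : ℝ}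
    (hA : HasDerivAt A A' x) (hH : IsUnit ((A x)ᵀ * A x)) (y : m → ℝ) :
    HasDerivAt (fun t => leastSquaresWeights (A t) y)
      (((A x)ᵀ * A x)⁻¹ *ᵥ (A'ᵀ *ᵥ y - ((A x)ᵀ * A') *ᵥ leastSquaresWeights (A x) y
        - (A'ᵀ * A x) *ᵥ leastSquaresWeights (A x) y)) x := by
  refine (((hA.matrix_transpose.matrix_mul hA).matrix_inv hH).matrix_mulVec
    (hA.matrix_transpose.matrix_mulVec (hasDerivAt_const x y))).congr_deriv ?_
  simp only [leastSquaresWeights, mulVec_zero, zero_add, neg_mulVec, ← mulVec_mulVec, add_mulVec,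
    mulVec_add, mulVec_sub]
  abel

end Matrix

/-- Edge influence on the model output for linear GCN: if `H := Xᵀ Cᵀ C X` is invertible,
`w*(ε) := (Xᵀ (C + εΞ)ᵀ (C + εΞ) X)⁻¹ Xᵀ (C + εΞ)ᵀ y` with `w* := w*(0)`, and
`P(ε) := (C + εΞ) X w*(ε)`, then `ε ↦ P(ε)` is differentiable at `ε = 0` with derivative
`Ξ X w* + C X H⁻¹ (Xᵀ Ξᵀ y − Xᵀ Cᵀ Ξ X w* − Xᵀ Ξᵀ C X w*)`. -/
theorem edge_influence_on_output (n d : ℕ) (C : Matrix (Fin n) (Fin n) ℝ)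
    (X : Matrix (Fin n) (Fin d) ℝ) (y : Fin n → ℝ) (Ξ : Matrix (Fin n) (Fin n) ℝ)
    (hH : Invertible (Xᵀ * Cᵀ * C * X))
    (wstar : Fin d → ℝ)
    (hw : wstar = (Xᵀ * Cᵀ * C * X)⁻¹.mulVec ((Xᵀ * Cᵀ).mulVec y)) :
    HasDerivAt
      (fun ε : ℝ =>
        ((C + ε • Ξ) * X).mulVec
          ((Xᵀ * (C + ε • Ξ)ᵀ * (C + ε • Ξ) * X)⁻¹.mulVec
            ((Xᵀ * (C + ε • Ξ)ᵀ).mulVec y)))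
      ((Ξ * X).mulVec wstar +
        (C * X).mulVec
          ((Xᵀ * Cᵀ * C * X)⁻¹.mulVec
            ((Xᵀ * Ξᵀ).mulVec y - (Xᵀ * Cᵀ * Ξ * X).mulVec wstar
              - (Xᵀ * Ξᵀ * C * X).mulVec wstar))) 0 := by
  have hM : HasDerivAt (fun ε : ℝ => (C + ε • Ξ) * X) (Ξ * X) 0 := by
    simpa using (hasDerivAt_const_add_smul C Ξ 0).matrix_mul (hasDerivAt_const 0 X)
  have hunit : IsUnit (((C + (0 : ℝ) • Ξ) * X)ᵀ * ((C + (0 : ℝ) • Ξ) * X)) := by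
    simpa [Matrix.mul_assoc] using isUnit_of_invertible (Xᵀ * Cᵀ * C * X)
  convert hM.matrix_mulVec (hasDerivAt_leastSquaresWeights hM hunit y) using 1
  · funext ε
    simp [leastSquaresWeights, transpose_mul, Matrix.mul_assoc]
  · subst hw
    simp [leastSquaresWeights, transpose_mul, Matrix.mul_assoc, add_comm]
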